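/- Let p be a nonconstant complex polynomial, z₀ ∈ ℂ with p(z₀) ≠ 0 and p'(z₀) ≠ 0, and let r > 0 be such that every root of p lies in the closed disk of radius r centered at z₀. Identify ℂ with ℝ² and let a ∈ ℝ² be the vector corresponding to p(z₀)/p'(z₀). Set B = r²·I (I the 2×2 identity), c ∈ ℝ² the point corresponding to z₀, c' = c − Ba/(3√(aᵀBa)), and B' = (4/3)·( B − 2(Ba)(Ba)ᵀ/(3·aᵀBa) ). Then p has a root θ whose corresponding point x_θ ∈ ℝ² satisfies (x_θ − c')ᵀ (B')⁻¹ (x_θ − c') ≤ 1, i.e., the updated ellipsoid E(B',c') contains a root of p. -/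

import Mathlib

/-!
Since `p'(z₀) / p(z₀) = ∑ 1 / (z₀ - θ)` over the roots of `p`, the number `w = p(z₀) / p'(z₀)`
satisfies `∑ w / (z₀ - θ) = 1`, so some root has `Re (w / (z₀ - θ)) > 0`: it lies in the half-plane
`⟪a, x - c⟫ ≤ 0`, hence in the half-disk cut from `E(r²I, c)`. The ellipsoid-method update contains
that half-disk: for `B = r²I` the inverse of `B'` is explicit (rank-one perturbation of a multiple
of the identity), and membership reduces to a quadratic inequality in one real variable.
-/

open Matrix Polynomial ComplexConjugate

theorem Polynomial.exists_isRoot_re_mul_conj_neg {p : ℂ[X]} {z₀ : ℂ} (h0 : p.eval z₀ ≠ 0)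
    (h1 : p.derivative.eval z₀ ≠ 0) :
    ∃ θ, p.IsRoot θ ∧ (p.eval z₀ / p.derivative.eval z₀ * conj (θ - z₀)).re < 0 := by
  set w := p.eval z₀ / p.derivative.eval z₀ with hw
  have hsum : (p.roots.map fun θ ↦ w / (z₀ - θ)).sum = 1 := by
    simp_rw [div_eq_mul_one_div w]
    rw [Multiset.sum_map_mul_left, ← (IsAlgClosed.splits p).eval_derivative_div_eval_of_ne_zero h0,
      hw]
    field_simp
  obtain ⟨θ, hθ, hθpos⟩ : ∃ θ ∈ p.roots, 0 < (w / (z₀ - θ)).re := by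
    by_contra! hle
    have hre := congrArg Complex.reAddGroupHom hsum
    rw [map_multiset_sum, Multiset.map_map] at hre
    simp only [Function.comp_def, Complex.coe_reAddGroupHom, Complex.one_re] at hre
    have := Multiset.sum_map_le_sum_map _ (fun _ ↦ (0 : ℝ)) hle
    norm_num [hre] at this
  refine ⟨θ, isRoot_of_mem_roots hθ, ?_⟩
  rw [div_eq_mul_inv, Complex.inv_def, ← mul_assoc, Complex.re_mul_ofReal, ← neg_sub θ, map_neg,
    mul_neg, Complex.neg_re] at hθpos
  exact neg_pos.1 (pos_of_mul_pos_left hθpos (inv_nonneg.2 (Complex.normSq_nonneg _)))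

-- Applied with `N = ‖x - c‖²` and `σ = ⟪a, x - c⟫ / ‖a‖`. Up to the factor `k²r²`, the gap to `1` is
-- `(k² - 1)(r² - N) - 2(k + 1)σ(σ + r)`, so the bound is tight at both ends of the half-sphere.
theorem ellipsoidStep_scalar_bound {k r N σ : ℝ} (hk : 1 < k) (hr : 0 < r) (hN : N ≤ r ^ 2)
    (hσ : -r ≤ σ) (hσ' : σ ≤ 0) :
    (k ^ 2 - 1) / (k ^ 2 * r ^ 2) *
      (N + 2 * (r / (k + 1)) * σ + (r / (k + 1)) ^ 2 + 2 / (k - 1) * (σ + r / (k + 1)) ^ 2) ≤ 1 := by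
  have hk1 : k - 1 ≠ 0 := by linarith
  have hk2 : 0 < k ^ 2 - 1 := by nlinarith
  have key : (k ^ 2 - 1) *
      (N + 2 * (r / (k + 1)) * σ + (r / (k + 1)) ^ 2 + 2 / (k - 1) * (σ + r / (k + 1)) ^ 2)
      = k ^ 2 * r ^ 2 - (k ^ 2 - 1) * (r ^ 2 - N) + 2 * (k + 1) * (σ * (σ + r)) := by
    field_simp
    ring
  rw [div_mul_eq_mul_div, div_le_one (by positivity), key]
  nlinarith [mul_nonneg hk2.le (sub_nonneg.2 hN),
    mul_nonpos_of_nonpos_of_nonneg hσ' (neg_le_iff_add_nonneg.1 hσ)]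

section EllipsoidStep

variable {ι : Type*} [Fintype ι]

def ellipsoid [DecidableEq ι] (B : Matrix ι ι ℝ) (c : ι → ℝ) : Set (ι → ℝ) :=
  {x | (x - c) ⬝ᵥ B⁻¹ *ᵥ (x - c) ≤ 1}

noncomputable def ellipsoidStepCenter (k : ℝ) (B : Matrix ι ι ℝ) (c a : ι → ℝ) : ι → ℝ :=
  c - ((k + 1) * √(a ⬝ᵥ B *ᵥ a))⁻¹ • B *ᵥ a

noncomputable def ellipsoidStepShape (k : ℝ) (B : Matrix ι ι ℝ) (a : ι → ℝ) : Matrix ι ι ℝ :=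
  (k ^ 2 / (k ^ 2 - 1)) • (B - (2 / ((k + 1) * (a ⬝ᵥ B *ᵥ a))) • vecMulVec (B *ᵥ a) (B *ᵥ a))

theorem dotProduct_sq_le (v w : ι → ℝ) : (v ⬝ᵥ w) ^ 2 ≤ (v ⬝ᵥ v) * (w ⬝ᵥ w) := by
  simpa only [dotProduct, sq] using Finset.sum_mul_sq_le_sq_mul_sq Finset.univ v w

theorem vecMulVec_self_mul_self (v : ι → ℝ) :
    vecMulVec v v * vecMulVec v v = (v ⬝ᵥ v) • vecMulVec v v := by
  rw [vecMulVec_mul_vecMulVec, vecMulVec_smul]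

variable [DecidableEq ι] {k r : ℝ} {a : ι → ℝ}

theorem dotProduct_smul_one_add_smul_vecMulVec_mulVec (s γ : ℝ) (a y : ι → ℝ) :
    y ⬝ᵥ (s • (1 + γ • vecMulVec a a)) *ᵥ y = s * (y ⬝ᵥ y + γ * (a ⬝ᵥ y) ^ 2) := by
  simp only [smul_mulVec, add_mulVec, one_mulVec, vecMulVec_mulVec, dotProduct_smul,
    dotProduct_add, op_smul_eq_smul, smul_eq_mul, dotProduct_comm y a]
  ring

theorem ellipsoidStepCenter_smul_one (hr : 0 < r) (c : ι → ℝ) :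
    ellipsoidStepCenter k (r ^ 2 • 1) c a = c - (r / ((k + 1) * √(a ⬝ᵥ a))) • a := by
  rw [ellipsoidStepCenter, smul_mulVec, one_mulVec, dotProduct_smul, smul_eq_mul,
    Real.sqrt_mul (by positivity), Real.sqrt_sq hr.le, smul_smul]
  congr 2
  field_simp

theorem ellipsoidStepShape_smul_one (hr : r ≠ 0) :
    ellipsoidStepShape k (r ^ 2 • 1) a =
      (k ^ 2 * r ^ 2 / (k ^ 2 - 1)) • (1 - (2 / ((k + 1) * (a ⬝ᵥ a))) • vecMulVec a a) := by
  rw [ellipsoidStepShape, smul_mulVec, one_mulVec, dotProduct_smul, smul_eq_mul,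
    smul_vecMulVec, vecMulVec_smul, smul_smul, smul_smul]
  match_scalars <;> field_simp

theorem inv_ellipsoidStepShape_smul_one (hk : 1 < k) (hr : r ≠ 0) (ha : a ≠ 0) :
    (ellipsoidStepShape k (r ^ 2 • 1) a)⁻¹ =
      ((k ^ 2 - 1) / (k ^ 2 * r ^ 2)) • (1 + (2 / ((k - 1) * (a ⬝ᵥ a))) • vecMulVec a a) := by
  rw [ellipsoidStepShape_smul_one hr]
  refine inv_eq_right_inv ?_
  have hq : a ⬝ᵥ a ≠ 0 := by simpa using ha
  have hk1 : k - 1 ≠ 0 := by linarith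
  have hk2 : k ^ 2 - 1 ≠ 0 := by nlinarith
  simp only [smul_mul_smul_comm, sub_mul, mul_add, one_mul, mul_one, vecMulVec_self_mul_self,
    smul_smul]
  match_scalars
  · field_simp
  · field_simp
    ring

theorem mem_ellipsoid_ellipsoidStep (hk : 1 < k) (hr : 0 < r) (ha : a ≠ 0) {c x : ι → ℝ}
    (hball : (x - c) ⬝ᵥ (x - c) ≤ r ^ 2) (hhalf : a ⬝ᵥ (x - c) ≤ 0) :
    x ∈ ellipsoid (ellipsoidStepShape k (r ^ 2 • 1) a) (ellipsoidStepCenter k (r ^ 2 • 1) c a) := by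
  set y := x - c with hy
  have hq : 0 < a ⬝ᵥ a := by simpa using dotProduct_star_self_pos_iff.2 ha
  set α := √(a ⬝ᵥ a)
  have hα : 0 < α := Real.sqrt_pos.2 hq
  have hαsq : α ^ 2 = a ⬝ᵥ a := Real.sq_sqrt hq.le
  have hαy : -(α * r) ≤ a ⬝ᵥ y := by
    refine (abs_le_of_sq_le_sq' ?_ (by positivity)).1
    calc (a ⬝ᵥ y) ^ 2 ≤ (a ⬝ᵥ a) * (y ⬝ᵥ y) := dotProduct_sq_le a y
      _ ≤ (α * r) ^ 2 := by rw [mul_pow, hαsq]; gcongr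
  have hshift : x - (c - (r / ((k + 1) * α)) • a) = y + (r / ((k + 1) * α)) • a := by
    rw [hy]; abel
  rw [ellipsoid, Set.mem_ofPred_eq, inv_ellipsoidStepShape_smul_one hk hr.ne' ha,
    ellipsoidStepCenter_smul_one hr, hshift, dotProduct_smul_one_add_smul_vecMulVec_mulVec]
  convert ellipsoidStep_scalar_bound hk hr hball (σ := a ⬝ᵥ y / α) ?_ ?_ using 2
  · have hk1 : k - 1 ≠ 0 := by linarith
    simp only [dotProduct_add, add_dotProduct, dotProduct_smul, smul_dotProduct, smul_eq_mul,
      dotProduct_comm y a, ← hαsq]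
    field_simp
    ring
  · rwa [le_div_iff₀ hα, neg_mul, mul_comm]
  · exact div_nonpos_of_nonpos_of_nonneg hhalf hα.le

end EllipsoidStep

theorem vec_re_im_sub (z w : ℂ) : ![z.re, z.im] - ![w.re, w.im] = ![(z - w).re, (z - w).im] := by
  simp

theorem vec_re_im_dotProduct (z w : ℂ) : ![z.re, z.im] ⬝ᵥ ![w.re, w.im] = (z * conj w).re := by
  simp [dotProduct, Fin.sum_univ_two]

theorem vec_re_im_dotProduct_self (z : ℂ) : ![z.re, z.im] ⬝ᵥ ![z.re, z.im] = ‖z‖ ^ 2 := by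
  rw [vec_re_im_dotProduct, Complex.mul_conj, Complex.ofReal_re, Complex.normSq_eq_norm_sq]

theorem vec_re_im_ne_zero {z : ℂ} (hz : z ≠ 0) : ![z.re, z.im] ≠ 0 := by
  rw [Ne, ← dotProduct_self_eq_zero, vec_re_im_dotProduct_self]
  exact pow_ne_zero 2 (norm_ne_zero_iff.2 hz)

theorem newton_ellipsoid_step_contains_root_general
    (p : Polynomial ℂ)
    (z₀ : ℂ) (h0 : p.eval z₀ ≠ 0) (h1 : p.derivative.eval z₀ ≠ 0)
    (r : ℝ) (hr : 0 < r)
    (hroots : ∀ θ : ℂ, p.eval θ = 0 → ‖θ - z₀‖ ≤ r)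
    (a : Fin 2 → ℝ)
    (ha : a = ![(p.eval z₀ / p.derivative.eval z₀).re, (p.eval z₀ / p.derivative.eval z₀).im])
    (c : Fin 2 → ℝ) (hc : c = ![z₀.re, z₀.im])
    (B : Matrix (Fin 2) (Fin 2) ℝ) (hB : B = r ^ 2 • (1 : Matrix (Fin 2) (Fin 2) ℝ))
    (c' : Fin 2 → ℝ) (hc' : c' = c - (3 * Real.sqrt (a ⬝ᵥ B.mulVec a))⁻¹ • B.mulVec a)
    (B' : Matrix (Fin 2) (Fin 2) ℝ)
    (hB' : B' = (4 / 3 : ℝ) •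
      (B - (2 / (3 * (a ⬝ᵥ B.mulVec a))) • vecMulVec (B.mulVec a) (B.mulVec a))) :
    ∃ θ : ℂ, p.eval θ = 0 ∧
      (![θ.re, θ.im] - c') ⬝ᵥ B'⁻¹.mulVec (![θ.re, θ.im] - c') ≤ 1 := by
  obtain ⟨θ, hθ, hhalf⟩ := p.exists_isRoot_re_mul_conj_neg h0 h1
  have hc'_eq : c' = ellipsoidStepCenter 2 B c a := by
    rw [hc', ellipsoidStepCenter]; norm_num
  have hB'_eq : B' = ellipsoidStepShape 2 B a := by
    rw [hB', ellipsoidStepShape]; norm_num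
  refine ⟨θ, hθ, ?_⟩
  rw [hc'_eq, hB'_eq, hB]
  refine mem_ellipsoid_ellipsoidStep one_lt_two hr (ha ▸ vec_re_im_ne_zero (div_ne_zero h0 h1)) ?_ ?_
  · rw [hc, vec_re_im_sub, vec_re_im_dotProduct_self]
    exact pow_le_pow_left₀ (norm_nonneg _) (hroots θ hθ) 2
  · rw [ha, hc, vec_re_im_sub, vec_re_im_dotProduct]
    exact hhalf.le

/-- One step of the Newton–Ellipsoid method: starting from the disk
`E(r²I, z₀)` containing all roots of `p`, the updated ellipsoid `E(B',c')` determined by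
the half-plane with normal `a = p(z₀)/p'(z₀)` still contains a root of `p`. -/
theorem newton_ellipsoid_step_contains_root
    (p : Polynomial ℂ) (hp : 1 ≤ p.natDegree)
    (z₀ : ℂ) (h0 : p.eval z₀ ≠ 0) (h1 : p.derivative.eval z₀ ≠ 0)
    (r : ℝ) (hr : 0 < r)
    (hroots : ∀ θ : ℂ, p.eval θ = 0 → ‖θ - z₀‖ ≤ r)
    (a : Fin 2 → ℝ)
    (ha : a = ![(p.eval z₀ / p.derivative.eval z₀).re, (p.eval z₀ / p.derivative.eval z₀).im])
    (c : Fin 2 → ℝ) (hc : c = ![z₀.re, z₀.im])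
    (B : Matrix (Fin 2) (Fin 2) ℝ) (hB : B = r ^ 2 • (1 : Matrix (Fin 2) (Fin 2) ℝ))
    (c' : Fin 2 → ℝ) (hc' : c' = c - (3 * Real.sqrt (a ⬝ᵥ B.mulVec a))⁻¹ • B.mulVec a)
    (B' : Matrix (Fin 2) (Fin 2) ℝ)
    (hB' : B' = (4 / 3 : ℝ) •
      (B - (2 / (3 * (a ⬝ᵥ B.mulVec a))) • vecMulVec (B.mulVec a) (B.mulVec a))) :
    ∃ θ : ℂ, p.eval θ = 0 ∧
      (![θ.re, θ.im] - c') ⬝ᵥ B'⁻¹.mulVec (![θ.re, θ.im] - c') ≤ 1 :=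
  newton_ellipsoid_step_contains_root_general p z₀ h0 h1 r hr hroots a ha c hc B hB c' hc' B' hB'
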